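/- For every r ≥ 2 there is a constant c_r (one may take c_r = 30·(r choose 2)²·log₂ r) such that for every ℓ ≥ 2, every matrix with entries in {0,1,…,r−1} having more than 2^{c_r·ℓ⁴} distinct columns contains as a submatrix (rows i₁ < … < i_ℓ and columns j₁ < … < j_ℓ, both in increasing order) one of the matrices I_ℓ(a,b), T_ℓ(a,b), I_ℓ^R(a,b), or T_ℓ^R(a,b) for some a ≠ b ∈ {0,…,r−1}. -/

import Mathlib

/-- An `r`-matrix with explicit row and column counts: a matrix with
entries in `{0,1,…,r-1}` (modelled as `Fin r`). -/
structure RMat (r : ℕ) where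
  rows : ℕ
  cols : ℕ
  mat : Matrix (Fin rows) (Fin cols) (Fin r)

/-- A matrix is *simple* if its columns are pairwise distinct. -/
def Simple {r m n : ℕ} (A : Matrix (Fin m) (Fin n) (Fin r)) : Prop :=
  Function.Injective fun j : Fin n => fun i : Fin m => A i j

/-- A matrix is *`s`-simple* if every column appears with multiplicity at most `s`. -/
def SSimple {r m n : ℕ} (s : ℕ) (A : Matrix (Fin m) (Fin n) (Fin r)) : Prop :=
  ∀ c : Fin m → Fin r,
    (Finset.univ.filter fun j : Fin n => (fun i : Fin m => A i j) = c).card ≤ s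

/-- `F` is a *configuration* in `A` (written `F ≺ A`): some row and column
permutation of `F` is a submatrix of `A`; equivalently there are injections
of the rows and the columns of `F` into those of `A` realizing `F`. -/
def ConfigSub {r k l m n : ℕ} (F : Matrix (Fin k) (Fin l) (Fin r))
    (A : Matrix (Fin m) (Fin n) (Fin r)) : Prop :=
  ∃ ρ : Fin k → Fin m, ∃ σ : Fin l → Fin n,
    Function.Injective ρ ∧ Function.Injective σ ∧ ∀ i j, A (ρ i) (σ j) = F i j

/-- Configuration relation for a packaged matrix `F : RMat r`. -/
def ConfigIn {r m n : ℕ} (F : RMat r) (A : Matrix (Fin m) (Fin n) (Fin r)) : Prop :=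
  ConfigSub F.mat A

/-- `A` avoids every member of the family `𝓕`. -/
def AvoidsF {r m n : ℕ} (𝓕 : Set (RMat r)) (A : Matrix (Fin m) (Fin n) (Fin r)) : Prop :=
  ∀ F ∈ 𝓕, ¬ ConfigIn F A

/-- `forb m r 𝓕`: the maximum number of columns of an `m`-rowed simple
`r`-matrix having no member of `𝓕` as a configuration. -/
noncomputable def forb (m r : ℕ) (𝓕 : Set (RMat r)) : ℕ :=
  sSup { n | ∃ A : Matrix (Fin m) (Fin n) (Fin r), Simple A ∧ AvoidsF 𝓕 A }

/-- `forbS m r 𝓕 s`: the analogous maximum over `m`-rowed `s`-simple `r`-matrices. -/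
noncomputable def forbS (m r : ℕ) (𝓕 : Set (RMat r)) (s : ℕ) : ℕ :=
  sSup { n | ∃ A : Matrix (Fin m) (Fin n) (Fin r), SSimple s A ∧ AvoidsF 𝓕 A }

/-- `forbP m r S 𝓕`: as `forb`, but over simple matrices all of whose entries lie
in the set `S ⊆ {0,…,r-1}`. -/
noncomputable def forbP (m r : ℕ) (S : Set (Fin r)) (𝓕 : Set (RMat r)) : ℕ :=
  sSup { n | ∃ A : Matrix (Fin m) (Fin n) (Fin r),
    Simple A ∧ (∀ i j, A i j ∈ S) ∧ AvoidsF 𝓕 A }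

/-- `forbmaxP m r S 𝓕 = max_{1 ≤ m' ≤ m} forbP m' r S 𝓕`. -/
noncomputable def forbmaxP (m r : ℕ) (S : Set (Fin r)) (𝓕 : Set (RMat r)) : ℕ :=
  (Finset.Icc 1 m).sup fun m' => forbP m' r S 𝓕

/-- `I_ℓ(a,b)`: the `ℓ×ℓ` matrix with `a`'s on the diagonal and `b`'s elsewhere. -/
def Imat (ℓ r : ℕ) (a b : Fin r) : Matrix (Fin ℓ) (Fin ℓ) (Fin r) :=
  fun i j => if i = j then a else b

/-- `T_ℓ(a,b)`: the `ℓ×ℓ` matrix with `a`'s strictly below the diagonal and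
`b`'s on and above the diagonal. -/
def Tmat (ℓ r : ℕ) (a b : Fin r) : Matrix (Fin ℓ) (Fin ℓ) (Fin r) :=
  fun i j => if (j : ℕ) < (i : ℕ) then a else b

/-- The family `𝓣_ℓ(r) = {I_ℓ(a,b) : a ≠ b} ∪ {T_ℓ(a,b) : a ≠ b}`. -/
def TFam (ℓ r : ℕ) : Set (RMat r) :=
  { F | ∃ a b : Fin r, a ≠ b ∧
      (F = ⟨ℓ, ℓ, Imat ℓ r a b⟩ ∨ F = ⟨ℓ, ℓ, Tmat ℓ r a b⟩) }

/-- `t·M`: the concatenation of `t` copies of `M`. -/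
def tCopy {r : ℕ} (t : ℕ) (M : RMat r) : RMat r :=
  ⟨M.rows, t * M.cols, fun i j => M.mat i (finProdFinEquiv.symm j).2⟩


/-!
Forget the order of the columns and work with the set `F` of distinct columns: the order is
recovered at the end by Erdős–Szekeres on the positions of the `L = (ℓ-1)² + 1` columns of an
unordered copy of `I_L(a,b)` or `T_L(a,b)`.

Delete the last row. A column of the remaining rows whose extensions in `F` use both letters of
a pair `{a, b}` branches on that pair, and `|F| ≤ |F'| + (r-1)·Σ |D_{ab}|`, where `F'` is the
set of restricted columns and `D_{ab}` the set of those branching on `{a, b}`. Every `T_k(a,b)`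
or `I⁺_k(a,b)` (`I_k(a,b)` with an extra all-`b` column) formed by columns of `D_{ab}` grows by
one row and one column in `F`. Hence the sum `Ψ` over pairs of the largest such pattern (capped
at `L - 1`, beyond which it gives `I_L` or `T_L`) is smaller on each `D_{ab}` than on `F`. The
rows at which `{a, b}` branches form stairs, and Ramsey's theorem with `r² + r - 1` colours turns
a long stair into `I_L` or `T_L`, so each pair branches at boundedly many rows. A double
induction on `Ψ` and on the number of rows bounds `|F|` by `(1 + (r-1)·C(r,2)·S)^(C(r,2)·(L-1))`
unless `F` contains `I_L(a,b)` or `T_L(a,b)`.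
-/

section ErdosSzekeres

open Classical

variable {β : Type*} [LinearOrder β] {N : ℕ}

noncomputable def incRunLength (f : Fin N → β) (n : ℕ) (i : Fin N) : ℕ :=
  Nat.findGreatest
    (fun k => ∃ g : Fin (k + 1) → Fin N, StrictMono g ∧ StrictMono (f ∘ g) ∧ g 0 = i) n

theorem exists_incRun (f : Fin N → β) (n : ℕ) (i : Fin N) :
    ∃ g : Fin (incRunLength f n i + 1) → Fin N, StrictMono g ∧ StrictMono (f ∘ g) ∧ g 0 = i :=
  Nat.findGreatest_spec (P := fun k => ∃ g : Fin (k + 1) → Fin N,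
      StrictMono g ∧ StrictMono (f ∘ g) ∧ g 0 = i) (Nat.zero_le n)
    ⟨fun _ => i, Subsingleton.strictMono (α := Fin 1) _,
      Subsingleton.strictMono (α := Fin 1) _, rfl⟩

theorem exists_incRun_of_incRunLength_eq {f : Fin N → β} {n : ℕ} {i : Fin N}
    (h : incRunLength f n i = n) :
    ∃ g : Fin (n + 1) → Fin N, StrictMono g ∧ StrictMono (f ∘ g) := by
  have := exists_incRun f n i
  rw [h] at this
  exact this.imp fun _ hg => ⟨hg.1, hg.2.1⟩

theorem incRunLength_lt {f : Fin N → β} {n : ℕ} {i j : Fin N} (hij : i < j) (hf : f i < f j)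
    (hj : incRunLength f n j < n) : incRunLength f n j < incRunLength f n i := by
  obtain ⟨g, hg, hfg, hg0⟩ := exists_incRun f n j
  refine Nat.le_findGreatest (m := incRunLength f n j + 1) hj ⟨Fin.cons i g, ?_, ?_, rfl⟩
  · refine Fin.strictMono_cons.2 ⟨fun t => hij.trans_le ?_, hg⟩
    simpa [hg0] using hg.monotone (Fin.zero_le t)
  · rw [Fin.comp_cons]
    refine Fin.strictMono_cons.2 ⟨fun t => hf.trans_le ?_, hfg⟩
    simpa [hg0] using hfg.monotone (Fin.zero_le t)

/-- Erdős–Szekeres. -/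
theorem exists_strictMono_or_strictAnti_comp (f : Fin N → β) (hf : Function.Injective f)
    {n : ℕ} (hN : n * n < N) :
    ∃ g : Fin (n + 1) → Fin N, StrictMono g ∧ (StrictMono (f ∘ g) ∨ StrictAnti (f ∘ g)) := by
  set f' : Fin N → βᵒᵈ := OrderDual.toDual ∘ f
  by_cases hinc : ∃ i, incRunLength f n i = n
  · obtain ⟨g, hg, hfg⟩ := exists_incRun_of_incRunLength_eq hinc.choose_spec
    exact ⟨g, hg, .inl hfg⟩
  by_cases hdec : ∃ i, incRunLength f' n i = n
  · obtain ⟨g, hg, hfg⟩ := exists_incRun_of_incRunLength_eq hdec.choose_spec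
    exact ⟨g, hg, .inr (strictMono_toDual_comp_iff.1 hfg)⟩
  simp only [not_exists] at hinc hdec
  have hinc' i : incRunLength f n i < n := (Nat.findGreatest_le n).lt_of_ne (hinc i)
  have hdec' i : incRunLength f' n i < n := (Nat.findGreatest_le n).lt_of_ne (hdec i)
  have hinj : Function.Injective fun i => (incRunLength f n i, incRunLength f' n i) := by
    refine .of_lt_imp_ne fun i j hij h => ?_
    simp only [Prod.mk.injEq] at h
    rcases lt_or_gt_of_ne (hf.ne hij.ne) with hfij | hfij
    · exact (incRunLength_lt hij hfij (hinc' j)).ne' h.1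
    · exact (incRunLength_lt (f := f') hij hfij (hdec' j)).ne' h.2
  have := Finset.card_le_card_of_injOn _ (s := Finset.univ) (t := Finset.range n ×ˢ Finset.range n)
    (fun i _ => by simp [hinc' i, hdec' i]) hinj.injOn
  simp only [Finset.card_univ, Fintype.card_fin, Finset.card_product, Finset.card_range] at this
  omega

end ErdosSzekeres

section Ramsey

variable {ι C : Type*} [LinearOrder ι] [Fintype C] [DecidableEq C]

theorem exists_strictMono_color_eq_left (κ : ι → ι → C) (hC : 2 ≤ Fintype.card C) :
    ∀ (M : ℕ) (S : Finset ι), Fintype.card C ^ M ≤ S.card →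
      ∃ x : Fin M → ι, StrictMono x ∧ (∀ i, x i ∈ S) ∧
        ∃ h : Fin M → C, ∀ i j, i < j → κ (x i) (x j) = h i := by
  intro M
  induction M with
  | zero => exact fun _ _ => ⟨Fin.elim0, fun i => i.elim0, fun i => i.elim0, Fin.elim0,
      fun i => i.elim0⟩
  | succ M ih =>
    intro S hS
    have hS0 : S.Nonempty := Finset.card_pos.1 (lt_of_lt_of_le (by positivity) hS)
    set x₀ := S.min' hS0
    have hx₀ : x₀ ∈ S := S.min'_mem hS0
    have hpow : Fintype.card C * (Fintype.card C ^ M - 1) + Fintype.card C =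
        Fintype.card C ^ (M + 1) := by
      rw [Nat.mul_sub_one, ← pow_succ', Nat.sub_add_cancel]
      exact Nat.le_self_pow (Nat.succ_ne_zero M) _
    obtain ⟨γ, -, hγ⟩ := Finset.exists_lt_card_fiber_of_mul_lt_card_of_maps_to
      (s := S.erase x₀) (t := Finset.univ) (f := κ x₀) (n := Fintype.card C ^ M - 1)
      (fun _ _ => Finset.mem_univ _)
      (by rw [Finset.card_erase_of_mem hx₀, Finset.card_univ]; omega)
    obtain ⟨x, hx, hxS, h, hxh⟩ := ih _ (Nat.le_of_pred_lt hγ)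
    have hx₀x : ∀ i, x₀ < x i := fun i => by
      have hi := Finset.mem_of_mem_filter _ (hxS i)
      exact lt_of_le_of_ne (S.min'_le _ (Finset.mem_of_mem_erase hi))
        (Finset.ne_of_mem_erase hi).symm
    refine ⟨Fin.cons x₀ x, Fin.strictMono_cons.2 ⟨hx₀x, hx⟩, fun i => ?_, Fin.cons γ h,
      fun i j hij => ?_⟩
    · induction i using Fin.cases with
      | zero => exact hx₀
      | succ i => exact Finset.mem_of_mem_erase (Finset.mem_of_mem_filter _ (hxS i))
    · induction j using Fin.cases with
      | zero => exact absurd hij (Fin.not_lt_zero i)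
      | succ j =>
        induction i using Fin.cases with
        | zero => simpa using (Finset.mem_filter.1 (hxS j)).2
        | succ i => simpa using hxh i j (Fin.succ_lt_succ_iff.1 hij)

/-- Ramsey's theorem for pairs. -/
theorem exists_strictMono_monochromatic (κ : ι → ι → C) (hC : 2 ≤ Fintype.card C) (T : ℕ)
    (S : Finset ι) (hS : Fintype.card C ^ (Fintype.card C * T + 1) ≤ S.card) :
    ∃ g : Fin (T + 1) → ι, StrictMono g ∧ ∃ γ, ∀ s t, s < t → κ (g s) (g t) = γ := by
  obtain ⟨x, hx, -, h, hxh⟩ := exists_strictMono_color_eq_left κ hC _ S hS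
  obtain ⟨γ, -, hγ⟩ := Finset.exists_lt_card_fiber_of_mul_lt_card_of_maps_to
    (s := Finset.univ) (t := Finset.univ) (f := h) (n := T) (fun _ _ => Finset.mem_univ _)
    (by simp)
  obtain ⟨I, hIγ, hI⟩ := Finset.exists_subset_card_eq (Nat.succ_le_of_lt hγ)
  refine ⟨x ∘ I.orderEmbOfFin hI, hx.comp (I.orderEmbOfFin hI).strictMono, γ, fun s t hst => ?_⟩
  rw [Function.comp_apply, Function.comp_apply, hxh _ _ ((I.orderEmbOfFin hI).strictMono hst)]
  exact (Finset.mem_filter.1 (hIγ (I.orderEmbOfFin_mem hI s))).2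

end Ramsey

theorem StrictMono.snoc_last {k m : ℕ} {ρ : Fin k → Fin m} (hρ : StrictMono ρ) :
    StrictMono (Fin.snoc (Fin.castSucc ∘ ρ) (Fin.last m) : Fin (k + 1) → Fin (m + 1)) := by
  intro p q hpq
  induction q using Fin.lastCases with
  | last =>
    induction p using Fin.lastCases with
    | last => exact absurd hpq (lt_irrefl _)
    | cast p => simp
  | cast q =>
    induction p using Fin.lastCases with
    | last => exact absurd hpq (not_lt.2 (Fin.le_last _))
    | cast p => simpa using hρ (Fin.castSucc_lt_castSucc_iff.1 hpq)

section PatternMatrices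

open scoped Matrix

variable {r k l : ℕ} {a b : Fin r}

/-- `I_k(a,b)` followed by an all-`b` column. -/
def IPlusMat (k : ℕ) (a b : Fin r) : Matrix (Fin k) (Fin (k + 1)) (Fin r) :=
  fun p q => if p.castSucc = q then a else b

theorem IPlusMat_submatrix_castSucc :
    (IPlusMat k a b).submatrix id Fin.castSucc = Imat k r a b := by
  ext p q
  simp [IPlusMat, Imat]

theorem Tmat_succ_succ : Tmat (l + 2) r a b =
    Fin.snoc (fun p => Fin.snoc (Tmat (l + 1) r a b p) (Tmat (l + 1) r a b p (Fin.last l)))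
      (Fin.snoc (fun _ => a) b) := by
  ext p q
  induction p using Fin.lastCases <;> induction q using Fin.lastCases <;>
    simp only [Tmat, Fin.snoc_castSucc, Fin.snoc_last, Fin.val_castSucc, Fin.val_last] <;>
    split_ifs <;> first | rfl | omega

theorem IPlusMat_succ : IPlusMat (k + 1) a b =
    Fin.snoc (fun p => Fin.snoc (IPlusMat k a b p) (IPlusMat k a b p (Fin.last k)))
      (Fin.snoc (fun q => if q = Fin.last k then a else b) b) := by
  ext p q
  induction p using Fin.lastCases <;> induction q using Fin.lastCases <;>
    simp only [IPlusMat, Fin.snoc_castSucc, Fin.snoc_last, Fin.ext_iff, Fin.val_castSucc,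
      Fin.val_last] <;> split_ifs <;> first | rfl | omega

theorem Imat_submatrix_of_strictMono {L ℓ : ℕ} {g : Fin ℓ → Fin L} (hg : StrictMono g) :
    (Imat L r a b).submatrix g g = Imat ℓ r a b := by
  ext p q
  simp [Imat, hg.injective.eq_iff]

theorem Tmat_submatrix_of_strictMono {L ℓ : ℕ} {g : Fin ℓ → Fin L} (hg : StrictMono g) :
    (Tmat L r a b).submatrix g g = Tmat ℓ r a b := by
  ext p q
  simp [Tmat, hg.lt_iff_lt]

theorem Imat_transpose_injective (hab : a ≠ b) : Function.Injective (Imat k r a b)ᵀ := by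
  intro q q' h
  by_contra hne
  have := congrFun h q
  simp [Imat, hne, hab] at this

theorem Tmat_transpose_injective (hab : a ≠ b) : Function.Injective (Tmat k r a b)ᵀ := by
  intro q q' h
  by_contra hne
  rcases lt_or_gt_of_ne hne with hlt | hlt
  · have := congrFun h q'
    simp [Tmat, Fin.lt_def.1 hlt, hab] at this
  · have := congrFun h q
    simp [Tmat, Fin.lt_def.1 hlt, hab.symm] at this

end PatternMatrices

namespace ColumnSet

section Realizes

variable {α : Type*} {m k l : ℕ}

def Realizes (F : Finset (Fin m → α)) (E : Matrix (Fin k) (Fin l) α) : Prop :=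
  ∃ ρ : Fin k → Fin m, StrictMono ρ ∧
    ∃ y : Fin l → Fin m → α, (∀ q, y q ∈ F) ∧ ∀ p q, y q (ρ p) = E p q

theorem Realizes.submatrix {F : Finset (Fin m → α)} {E : Matrix (Fin k) (Fin l) α}
    (h : Realizes F E) {k' l' : ℕ} {ρ' : Fin k' → Fin k} (hρ' : StrictMono ρ')
    (σ' : Fin l' → Fin l) : Realizes F (E.submatrix ρ' σ') := by
  obtain ⟨ρ, hρ, y, hyF, hy⟩ := h
  exact ⟨ρ ∘ ρ', hρ.comp hρ', y ∘ σ', fun q => hyF _, fun p q => hy _ _⟩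

theorem Realizes.of_subset_image_init [DecidableEq α] {F : Finset (Fin (m + 1) → α)}
    {H : Finset (Fin m → α)} {E : Matrix (Fin k) (Fin l) α} (h : Realizes H E)
    (hH : H ⊆ F.image Fin.init) : Realizes F E := by
  obtain ⟨ρ, hρ, y, hyH, hy⟩ := h
  choose f hfF hfy using fun q => Finset.mem_image.1 (hH (hyH q))
  refine ⟨Fin.castSucc ∘ ρ, Fin.strictMono_castSucc.comp hρ, f, hfF, fun p q => ?_⟩
  rw [← hy p q, ← hfy q]
  rfl

/-- Appending a last row and duplicating the last column: the new row reads `c` on the old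
columns and `b` on the copy. -/
theorem Realizes.extend {F : Finset (Fin (m + 1) → α)} {H : Finset (Fin m → α)}
    {E : Matrix (Fin k) (Fin (l + 1)) α} (h : Realizes H E) (c : Fin (l + 1) → α) (b : α)
    (hc : ∀ g ∈ H, ∀ q, Fin.snoc g (c q) ∈ F) (hb : ∀ g ∈ H, Fin.snoc g b ∈ F) :
    Realizes F (Fin.snoc (fun p => Fin.snoc (E p) (E p (Fin.last l))) (Fin.snoc c b) :
      Matrix (Fin (k + 1)) (Fin (l + 2)) α) := by
  obtain ⟨ρ, hρ, y, hyH, hy⟩ := h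
  refine ⟨_, hρ.snoc_last, Fin.snoc (fun q => Fin.snoc (y q) (c q)) (Fin.snoc (y (Fin.last l)) b),
    fun q => ?_, fun p q => ?_⟩
  · induction q using Fin.lastCases <;> simp [hc, hb, hyH]
  · induction p using Fin.lastCases <;> induction q using Fin.lastCases <;> simp [hy]

def triangleMat (n : ℕ) (x d y : α) : Matrix (Fin n) (Fin n) α :=
  fun s t => if s < t then x else if s = t then d else y

theorem realizes_triangleMat {F : Finset (Fin m → α)} {n : ℕ} {J : Fin n → Fin m}
    (hJ : StrictMono J) {W : Fin n → Fin m → α} (hW : ∀ t, W t ∈ F) {x d y : α}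
    (hd : ∀ t, W t (J t) = d) (hxy : ∀ s t, s < t → W t (J s) = x ∧ W s (J t) = y) :
    Realizes F (triangleMat n x d y) := by
  refine ⟨J, hJ, W, hW, fun s t => ?_⟩
  rcases lt_trichotomy s t with hst | rfl | hst
  · simp [triangleMat, hst, (hxy s t hst).1]
  · simp [triangleMat, hd]
  · simp [triangleMat, hst.not_gt, hst.ne', (hxy t s hst).2]

end Realizes

section Stair

variable {α : Type*} [DecidableEq α] {m k : ℕ}

def Stair (a b : α) (k : ℕ) (F : Finset (Fin m → α)) : Prop :=
  ∃ j : Fin k → Fin m, StrictMono j ∧ ∃ u v : Fin k → Fin m → α,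
    ∀ t, u t ∈ F ∧ v t ∈ F ∧ u t (j t) = a ∧ v t (j t) = b ∧ ∀ i < j t, u t i = v t i

theorem Stair.of_subset_image_init {F : Finset (Fin (m + 1) → α)} {H : Finset (Fin m → α)}
    {a b : α} (h : Stair a b k H) (hH : H ⊆ F.image Fin.init) : Stair a b k F := by
  obtain ⟨j, hj, u, v, huv⟩ := h
  choose u' hu'F hu' using fun t => Finset.mem_image.1 (hH (huv t).1)
  choose v' hv'F hv' using fun t => Finset.mem_image.1 (hH (huv t).2.1)
  refine ⟨Fin.castSucc ∘ j, Fin.strictMono_castSucc.comp hj, u', v', fun t => ?_⟩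
  obtain ⟨-, -, hua, hvb, hagree⟩ := huv t
  refine ⟨hu'F t, hv'F t, by simpa [← hu' t, Fin.init] using hua,
    by simpa [← hv' t, Fin.init] using hvb, fun i hi => ?_⟩
  induction i using Fin.lastCases with
  | last => exact absurd hi (not_lt.2 (Fin.le_last _))
  | cast i =>
    have := hagree i (Fin.castSucc_lt_castSucc_iff.1 hi)
    simpa [← hu' t, ← hv' t, Fin.init] using this

theorem Stair.snoc {F : Finset (Fin (m + 1) → α)} {a b : α}
    (h : Stair a b k (F.image Fin.init)) {g : Fin m → α} (ha : Fin.snoc g a ∈ F)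
    (hb : Fin.snoc g b ∈ F) : Stair a b (k + 1) F := by
  obtain ⟨j, hj, u, v, huv⟩ := h
  choose u' hu'F hu' using fun t => Finset.mem_image.1 (huv t).1
  choose v' hv'F hv' using fun t => Finset.mem_image.1 (huv t).2.1
  refine ⟨_, hj.snoc_last, Fin.snoc u' (Fin.snoc g a), Fin.snoc v' (Fin.snoc g b), fun t => ?_⟩
  induction t using Fin.lastCases with
  | last =>
    refine ⟨by simpa using ha, by simpa using hb, by simp, by simp, fun i hi => ?_⟩
    induction i using Fin.lastCases with
    | last => exact absurd hi (not_lt.2 (Fin.le_last _))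
    | cast i => simp
  | cast t =>
    obtain ⟨-, -, hua, hvb, hagree⟩ := huv t
    refine ⟨by simpa using hu'F t, by simpa using hv'F t, by simpa [← hu' t, Fin.init] using hua,
      by simpa [← hv' t, Fin.init] using hvb, fun i hi => ?_⟩
    induction i using Fin.lastCases with
    | last => exact absurd hi (not_lt.2 (Fin.le_last _))
    | cast i =>
      have := hagree i (by simpa using hi)
      simpa [← hu' t, ← hv' t, Fin.init] using this

end Stair

section TFamily

variable {r m : ℕ}

def ContainsTFam (L : ℕ) (F : Finset (Fin m → Fin r)) : Prop :=
  ∃ M ∈ TFam L r, Realizes F M.mat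

theorem ContainsTFam.of_subset_image_init {L : ℕ} {F : Finset (Fin (m + 1) → Fin r)}
    {H : Finset (Fin m → Fin r)} (h : ContainsTFam L H) (hH : H ⊆ F.image Fin.init) :
    ContainsTFam L F :=
  let ⟨M, hM, hMH⟩ := h
  ⟨M, hM, hMH.of_subset_image_init hH⟩

theorem triangleMat_submatrix_castLE {L n : ℕ} (hn : L ≤ n) (x d : Fin r) :
    (triangleMat n x d x).submatrix (Fin.castLE hn) (Fin.castLE hn) = Imat L r d x := by
  ext p q
  simp only [Imat, triangleMat, Matrix.submatrix_apply, Fin.lt_def, Fin.ext_iff, Fin.val_castLE]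
  split_ifs <;> first | rfl | omega

/-- Rows `2p` and columns `2q + 1` interleave, so the diagonal is never hit. -/
theorem triangleMat_submatrix_interleave {L n : ℕ} (hn : 2 * L ≤ n) (x d y : Fin r) :
    (triangleMat n x d y).submatrix (fun p : Fin L => ⟨2 * p, by omega⟩)
      (fun q : Fin L => ⟨2 * q + 1, by omega⟩) = Tmat L r y x := by
  ext p q
  simp only [Tmat, triangleMat, Matrix.submatrix_apply, Fin.lt_def, Fin.ext_iff]
  split_ifs <;> first | rfl | omega

theorem containsTFam_of_realizes_triangleMat {F : Finset (Fin m → Fin r)} {L n : ℕ}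
    (hn : 2 * L ≤ n) {x d y : Fin r} (hxdy : x ≠ d ∨ y ≠ d)
    (h : Realizes F (triangleMat n x d y)) : ContainsTFam L F := by
  by_cases hxy : x = y
  · subst hxy
    refine ⟨⟨L, L, Imat L r d x⟩, ⟨d, x, (hxdy.elim id id).symm, .inl rfl⟩, ?_⟩
    rw [← triangleMat_submatrix_castLE (L := L) (n := n) (by omega) x d]
    exact h.submatrix (Fin.strictMono_castLE _) _
  · refine ⟨⟨L, L, Tmat L r y x⟩, ⟨y, x, Ne.symm hxy, .inr rfl⟩, ?_⟩
    rw [← triangleMat_submatrix_interleave hn x d y]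
    exact h.submatrix (fun p q hpq => Fin.mk_lt_mk.2 (by have := Fin.lt_def.1 hpq; omega)) _

/-- The Ramsey bound for sequences of length `2L + 1` in `r * r - 1 + r` colours. -/
def stairBound (r L : ℕ) : ℕ :=
  (r * r - 1 + r) ^ ((r * r - 1 + r) * (2 * L) + 1)

/-- A pair of steps `s < t` of a stair is coloured by the entries of the `b`-columns `v t`, `v s`
in the rows `j s`, `j t`; when both are `b`, the `a`-column `u t` also reads `b` in row `j s`
(it agrees with `v t` above `j t`), and the colour is instead the entry of `u s` in row `j t`. -/
abbrev StairColor (b : Fin r) : Type := {xy : Fin r × Fin r // xy ≠ (b, b)} ⊕ Fin r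

theorem card_stairColor (b : Fin r) : Fintype.card (StairColor b) = r * r - 1 + r := by
  simp [Fintype.card_subtype_compl]

theorem containsTFam_of_stair {F : Finset (Fin m → Fin r)} {L : ℕ} {a b : Fin r} (hab : a ≠ b)
    (h : Stair a b (stairBound r L) F) : ContainsTFam L F := by
  obtain ⟨j, hj, u, v, huv⟩ := h
  have hr : 2 ≤ r := by
    by_contra hr
    interval_cases r <;> exact hab (Subsingleton.elim a b)
  let κ s t : StairColor b :=
    if hst : (v t (j s), v s (j t)) = (b, b) then .inr (u s (j t)) else .inl ⟨_, hst⟩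
  obtain ⟨g, hg, γ, hγ⟩ := exists_strictMono_monochromatic κ
    (by rw [card_stairColor]; nlinarith) (2 * L) Finset.univ
    (by rw [Finset.card_univ, Fintype.card_fin, card_stairColor]; rfl)
  rcases γ with ⟨⟨x, y⟩, hxy⟩ | w
  · have hκ s t (hst : s < t) : v (g t) (j (g s)) = x ∧ v (g s) (j (g t)) = y := by
      have := hγ s t hst
      simp only [κ] at this
      split_ifs at this
      simp_all
    exact containsTFam_of_realizes_triangleMat (by omega)
      (by by_contra! h; exact hxy (by rw [h.1, h.2]))
      (realizes_triangleMat (hj.comp hg) (fun t => (huv _).2.1) (fun t => (huv _).2.2.2.1) hκ)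
  · have hκ s t (hst : s < t) : u (g t) (j (g s)) = b ∧ u (g s) (j (g t)) = w := by
      have := hγ s t hst
      simp only [κ] at this
      split_ifs at this with h
      rw [(huv _).2.2.2.2 _ (hj (hg hst))]
      simp_all
    exact containsTFam_of_realizes_triangleMat (by omega) (.inl hab.symm)
      (realizes_triangleMat (hj.comp hg) (fun t => (huv _).1) (fun t => (huv _).2.2.1) hκ)

end TFamily

section Potentials

open Finset Classical

variable {r m : ℕ}

def HasPairPattern (s : Finset (Fin r)) (k : ℕ) (F : Finset (Fin m → Fin r)) : Prop :=
  ∃ a ∈ s, ∃ b ∈ s, a ≠ b ∧ (Realizes F (Tmat k r a b) ∨ Realizes F (IPlusMat k a b))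

noncomputable def patternSize (L : ℕ) (s : Finset (Fin r)) (F : Finset (Fin m → Fin r)) : ℕ :=
  Nat.findGreatest (fun k => HasPairPattern s k F) (L - 1)

noncomputable def patternPotential (L : ℕ) (F : Finset (Fin m → Fin r)) : ℕ :=
  ∑ s ∈ univ.powersetCard 2, patternSize L s F

def HasPairStair (s : Finset (Fin r)) (k : ℕ) (F : Finset (Fin m → Fin r)) : Prop :=
  ∃ a ∈ s, ∃ b ∈ s, a ≠ b ∧ Stair a b k F

noncomputable def stairSize (S : ℕ) (s : Finset (Fin r)) (F : Finset (Fin m → Fin r)) : ℕ :=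
  Nat.findGreatest (fun k => HasPairStair s k F) S

noncomputable def stairPotential (S : ℕ) (F : Finset (Fin m → Fin r)) : ℕ :=
  ∑ s ∈ univ.powersetCard 2, stairSize S s F

def branchSet (F : Finset (Fin (m + 1) → Fin r)) (s : Finset (Fin r)) :
    Finset (Fin m → Fin r) :=
  (F.image Fin.init).filter fun g => ∀ a ∈ s, Fin.snoc g a ∈ F

theorem branchSet_subset (F : Finset (Fin (m + 1) → Fin r)) (s : Finset (Fin r)) :
    branchSet F s ⊆ F.image Fin.init :=
  filter_subset _ _

theorem HasPairPattern.of_subset_image_init {s : Finset (Fin r)} {k : ℕ}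
    {F : Finset (Fin (m + 1) → Fin r)} {H : Finset (Fin m → Fin r)} (h : HasPairPattern s k H)
    (hH : H ⊆ F.image Fin.init) : HasPairPattern s k F := by
  obtain ⟨a, ha, b, hb, hab, h | h⟩ := h
  exacts [⟨a, ha, b, hb, hab, .inl (h.of_subset_image_init hH)⟩,
    ⟨a, ha, b, hb, hab, .inr (h.of_subset_image_init hH)⟩]

theorem HasPairPattern.containsTFam {s : Finset (Fin r)} {L : ℕ} {F : Finset (Fin m → Fin r)}
    (h : HasPairPattern s L F) : ContainsTFam L F := by
  obtain ⟨a, -, b, -, hab, h | h⟩ := h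
  · exact ⟨⟨L, L, Tmat L r a b⟩, ⟨a, b, hab, .inr rfl⟩, h⟩
  · refine ⟨⟨L, L, Imat L r a b⟩, ⟨a, b, hab, .inl rfl⟩, ?_⟩
    rw [← IPlusMat_submatrix_castSucc]
    exact h.submatrix strictMono_id _

theorem HasPairPattern.snoc {s : Finset (Fin r)} {k : ℕ} {F : Finset (Fin (m + 1) → Fin r)}
    {H : Finset (Fin m → Fin r)} (h : HasPairPattern s k H) (hH : H.Nonempty)
    (hext : ∀ g ∈ H, ∀ a ∈ s, Fin.snoc g a ∈ F) : HasPairPattern s (k + 1) F := by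
  obtain ⟨a, ha, b, hb, hab, h⟩ := h
  have extI {k : ℕ} (hI : Realizes H (IPlusMat k a b)) : Realizes F (IPlusMat (k + 1) a b) := by
    rw [IPlusMat_succ]
    refine hI.extend _ b (fun g hg q => ?_) (fun g hg => hext g hg b hb)
    split_ifs
    exacts [hext g hg a ha, hext g hg b hb]
  refine ⟨a, ha, b, hb, hab, ?_⟩
  rcases h with hT | hI
  · cases k with
    | zero =>
      obtain ⟨g, hg⟩ := hH
      exact .inr (extI ⟨Fin.elim0, fun i => i.elim0, fun _ => g, fun _ => hg, fun p => p.elim0⟩)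
    | succ l =>
      rw [Tmat_succ_succ]
      exact .inl (hT.extend _ b (fun g hg _ => hext g hg a ha) (fun g hg => hext g hg b hb))
  · exact .inr (extI hI)

theorem patternSize_le_of_subset_image_init (L : ℕ) (s : Finset (Fin r))
    {F : Finset (Fin (m + 1) → Fin r)} {H : Finset (Fin m → Fin r)}
    (hH : H ⊆ F.image Fin.init) : patternSize L s H ≤ patternSize L s F :=
  Nat.findGreatest_mono (fun _ h => h.of_subset_image_init hH) le_rfl

theorem patternSize_lt {L : ℕ} (hL : 0 < L) {s : Finset (Fin r)} (hs : s.card = 2)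
    {F : Finset (Fin (m + 1) → Fin r)} (hF : ¬ContainsTFam L F) {H : Finset (Fin m → Fin r)}
    (hH : H.Nonempty) (hext : ∀ g ∈ H, ∀ a ∈ s, Fin.snoc g a ∈ F) :
    patternSize L s H < patternSize L s F := by
  have hsize : HasPairPattern s (patternSize L s H) H := by
    refine Nat.findGreatest_spec (P := fun k => HasPairPattern s k H) (Nat.zero_le _) ?_
    obtain ⟨a, ha, b, hb, hab⟩ := one_lt_card.1 (by omega : 1 < s.card)
    obtain ⟨g, hg⟩ := hH
    exact ⟨a, ha, b, hb, hab, .inr ⟨Fin.elim0, fun i => i.elim0, fun _ => g, fun _ => hg,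
      fun p => p.elim0⟩⟩
  have hle : patternSize L s H ≤ L - 1 := Nat.findGreatest_le _
  have hnext := hsize.snoc hH hext
  by_contra hge
  have hsucc : patternSize L s H + 1 = L := by
    by_contra hne
    exact hge (Nat.le_findGreatest (P := fun k => HasPairPattern s k F) (by omega) hnext)
  exact hF (hsucc ▸ hnext.containsTFam)

theorem patternPotential_le_of_subset_image_init (L : ℕ) {F : Finset (Fin (m + 1) → Fin r)}
    {H : Finset (Fin m → Fin r)} (hH : H ⊆ F.image Fin.init) :
    patternPotential L H ≤ patternPotential L F :=
  sum_le_sum fun s _ => patternSize_le_of_subset_image_init L s hH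

theorem patternPotential_branchSet_lt {L : ℕ} (hL : 0 < L) {F : Finset (Fin (m + 1) → Fin r)}
    (hF : ¬ContainsTFam L F) {s : Finset (Fin r)} (hs : s ∈ univ.powersetCard 2)
    (hD : (branchSet F s).Nonempty) :
    patternPotential L (branchSet F s) < patternPotential L F :=
  sum_lt_sum (fun t _ => patternSize_le_of_subset_image_init L t (branchSet_subset F s))
    ⟨s, hs, patternSize_lt hL (mem_powersetCard.1 hs).2 hF hD
      fun _ hg => (mem_filter.1 hg).2⟩

theorem patternPotential_le (L : ℕ) (F : Finset (Fin m → Fin r)) :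
    patternPotential L F ≤ r.choose 2 * (L - 1) := by
  simpa [patternPotential] using
    sum_le_card_nsmul (univ.powersetCard 2) (patternSize L · F) (L - 1)
      fun _ _ => Nat.findGreatest_le _

theorem card_le_one_of_patternPotential_eq_zero {L : ℕ} (hL : 2 ≤ L)
    {F : Finset (Fin m → Fin r)} (hF : patternPotential L F = 0) : F.card ≤ 1 := by
  refine card_le_one.2 fun u hu v hv => funext fun i => ?_
  by_contra huv
  have hpair : {u i, v i} ∈ (univ : Finset (Fin r)).powersetCard 2 :=
    mem_powersetCard.2 ⟨subset_univ _, card_pair huv⟩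
  have hpattern : HasPairPattern {u i, v i} 1 F :=
    ⟨u i, by simp, v i, by simp, huv, .inl ⟨fun _ => i, Subsingleton.strictMono (α := Fin 1) _,
      fun _ => v, fun _ => hv, fun _ _ => by simp [Tmat]⟩⟩
  have := Nat.le_findGreatest (P := fun k => HasPairPattern {u i, v i} k F) (n := L - 1)
    (by omega) hpattern
  have := (sum_eq_zero_iff.1 hF) _ hpair
  simp only [patternSize] at this
  omega

theorem stairSize_le_of_subset_image_init (S : ℕ) (s : Finset (Fin r))
    {F : Finset (Fin (m + 1) → Fin r)} {H : Finset (Fin m → Fin r)}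
    (hH : H ⊆ F.image Fin.init) : stairSize S s H ≤ stairSize S s F :=
  Nat.findGreatest_mono (fun _ ⟨a, ha, b, hb, hab, h⟩ =>
    ⟨a, ha, b, hb, hab, h.of_subset_image_init hH⟩) le_rfl

theorem stairSize_lt {S : ℕ} {s : Finset (Fin r)} (hs : s.card = 2)
    {F : Finset (Fin (m + 1) → Fin r)} (hG : ¬HasPairStair s S (F.image Fin.init))
    {g : Fin m → Fin r} (hg : ∀ a ∈ s, Fin.snoc g a ∈ F) :
    stairSize S s (F.image Fin.init) < stairSize S s F := by
  obtain ⟨a, ha, b, hb, hab, hstair⟩ :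
      HasPairStair s (stairSize S s (F.image Fin.init)) (F.image Fin.init) := by
    refine Nat.findGreatest_spec (P := fun k => HasPairStair s k _) (Nat.zero_le _) ?_
    obtain ⟨a, ha, b, hb, hab⟩ := one_lt_card.1 (by omega : 1 < s.card)
    exact ⟨a, ha, b, hb, hab, Fin.elim0, fun i => i.elim0, Fin.elim0, Fin.elim0,
      fun t => t.elim0⟩
  have hlt : stairSize S s (F.image Fin.init) < S :=
    (Nat.findGreatest_le S).lt_of_ne fun h => hG (h ▸ ⟨a, ha, b, hb, hab, hstair⟩)
  exact Nat.le_findGreatest (P := fun k => HasPairStair s k F) hlt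
    ⟨a, ha, b, hb, hab, hstair.snoc (hg a ha) (hg b hb)⟩

theorem stairPotential_le (S : ℕ) (F : Finset (Fin m → Fin r)) :
    stairPotential S F ≤ r.choose 2 * S := by
  simpa [stairPotential] using sum_le_card_nsmul (univ.powersetCard 2) (stairSize S · F) S
    fun _ _ => Nat.findGreatest_le _

theorem card_filter_init_eq_le (F : Finset (Fin (m + 1) → Fin r)) (g : Fin m → Fin r) :
    (F.filter (Fin.init · = g)).card ≤
      1 + (r - 1) * ((univ.powersetCard 2).filter fun s => ∀ a ∈ s, Fin.snoc g a ∈ F).card := by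
  set V := F.filter (Fin.init · = g)
  have hsnoc : ∀ f ∈ V, Fin.snoc g (f (Fin.last m)) = f := fun f hf => by
    rw [← (mem_filter.1 hf).2, Fin.snoc_init_self]
  have hinj : Set.InjOn (fun f : Fin (m + 1) → Fin r => f (Fin.last m)) V := by
    intro f hf f' hf' h
    rw [← hsnoc f hf, ← hsnoc f' hf']
    exact congrArg _ h
  rcases le_or_gt V.card 1 with h1 | h1
  · omega
  obtain ⟨f, hf, f', hf', hne⟩ := one_lt_card.1 h1
  have hlast : f (Fin.last m) ≠ f' (Fin.last m) := fun h => hne (hinj hf hf' h)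
  have hpair : 1 ≤ ((univ.powersetCard 2).filter fun s => ∀ a ∈ s, Fin.snoc g a ∈ F).card := by
    refine card_pos.2 ⟨{f (Fin.last m), f' (Fin.last m)}, mem_filter.2
      ⟨mem_powersetCard.2 ⟨subset_univ _, card_pair hlast⟩, ?_⟩⟩
    simp only [mem_insert, mem_singleton, forall_eq_or_imp, forall_eq]
    rw [hsnoc f hf, hsnoc f' hf']
    exact ⟨(mem_filter.1 hf).1, (mem_filter.1 hf').1⟩
  have hr : V.card ≤ r := by
    simpa using card_le_card_of_injOn _ (fun _ _ => mem_univ _) hinj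
  have := Nat.le_mul_of_pos_right (r - 1) hpair
  omega

theorem card_le_card_image_init_add (F : Finset (Fin (m + 1) → Fin r)) :
    F.card ≤ (F.image Fin.init).card +
      (r - 1) * ∑ s ∈ univ.powersetCard 2, (branchSet F s).card := by
  calc F.card = ∑ g ∈ F.image Fin.init, (F.filter (Fin.init · = g)).card :=
        card_eq_sum_card_image _ _
    _ ≤ ∑ g ∈ F.image Fin.init, (1 + (r - 1) *
          ((univ.powersetCard 2).filter fun s => ∀ a ∈ s, Fin.snoc g a ∈ F).card) :=
        sum_le_sum fun g _ => card_filter_init_eq_le F g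
    _ = _ := by
      rw [sum_add_distrib, ← mul_sum, sum_const, smul_eq_mul, mul_one]
      congr 2
      exact sum_card_bipartiteAbove_eq_sum_card_bipartiteBelow _

end Potentials

section Counting

open Finset

variable {r L S : ℕ}

def StairsForceTFam (r L S : ℕ) : Prop :=
  ∀ {m} (F : Finset (Fin m → Fin r)) (a b : Fin r), a ≠ b → Stair a b S F → ContainsTFam L F

theorem stairsForceTFam_stairBound (r L : ℕ) : StairsForceTFam r L (stairBound r L) :=
  fun _ _ _ hab h => containsTFam_of_stair hab h

theorem mul_stairSize_add_card_branchSet_le {B n : ℕ} (hL : 0 < L)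
    (hstair : StairsForceTFam r L S)
    (hB : ∀ {m} (H : Finset (Fin m → Fin r)), ¬ContainsTFam L H → patternPotential L H ≤ n →
      H.card ≤ B)
    {m : ℕ} {F : Finset (Fin (m + 1) → Fin r)} (hF : ¬ContainsTFam L F)
    (hpot : patternPotential L F ≤ n + 1) {s : Finset (Fin r)} (hs : s ∈ univ.powersetCard 2) :
    B * stairSize S s (F.image Fin.init) + (branchSet F s).card ≤ B * stairSize S s F := by
  rcases (branchSet F s).eq_empty_or_nonempty with hD | hD
  · rw [hD, card_empty, add_zero]
    exact Nat.mul_le_mul_left _ (stairSize_le_of_subset_image_init S s (Subset.refl _))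
  have hcard : (branchSet F s).card ≤ B :=
    hB _ (fun h => hF (h.of_subset_image_init (branchSet_subset F s)))
      (by have := patternPotential_branchSet_lt hL hF hs hD; omega)
  obtain ⟨g, hg⟩ := hD
  have hlt := stairSize_lt (S := S) (mem_powersetCard.1 hs).2
    (fun ⟨a, _, b, _, hab, h⟩ => hF ((hstair _ a b hab h).of_subset_image_init (Subset.refl _)))
    (mem_filter.1 hg).2
  calc B * stairSize S s (F.image Fin.init) + (branchSet F s).card
      ≤ B * (stairSize S s (F.image Fin.init) + 1) := by rw [mul_add_one]; omega
    _ ≤ B * stairSize S s F := Nat.mul_le_mul_left _ hlt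

theorem card_le_of_patternPotential_le_succ {B n : ℕ} (hL : 0 < L)
    (hstair : StairsForceTFam r L S)
    (hB : ∀ {m} (H : Finset (Fin m → Fin r)), ¬ContainsTFam L H → patternPotential L H ≤ n →
      H.card ≤ B) :
    ∀ {m} (F : Finset (Fin m → Fin r)), ¬ContainsTFam L F → patternPotential L F ≤ n + 1 →
      F.card ≤ 1 + (r - 1) * B * stairPotential S F := by
  intro m
  induction m with
  | zero =>
    intro F _ _
    exact (card_le_one.2 fun _ _ _ _ => Subsingleton.elim _ _).trans (Nat.le_add_right _ _)
  | succ m ih =>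
    intro F hF hpot
    have hGF : ¬ContainsTFam L (F.image Fin.init) :=
      fun h => hF (h.of_subset_image_init (Subset.refl _))
    have hGpot : patternPotential L (F.image Fin.init) ≤ n + 1 :=
      (patternPotential_le_of_subset_image_init L (Subset.refl _)).trans hpot
    have hG : (F.image Fin.init).card ≤
        1 + (r - 1) * B * stairPotential S (F.image Fin.init) := ih _ hGF hGpot
    have hsum : B * stairPotential S (F.image Fin.init) +
        ∑ s ∈ univ.powersetCard 2, (branchSet F s).card ≤ B * stairPotential S F := by
      rw [stairPotential, stairPotential, mul_sum, mul_sum, ← sum_add_distrib]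
      exact sum_le_sum fun s hs =>
        mul_stairSize_add_card_branchSet_le hL hstair hB hF hpot hs
    calc F.card
        ≤ (F.image Fin.init).card + (r - 1) * ∑ s ∈ univ.powersetCard 2, (branchSet F s).card :=
          card_le_card_image_init_add F
      _ ≤ 1 + (r - 1) * (B * stairPotential S (F.image Fin.init) +
            ∑ s ∈ univ.powersetCard 2, (branchSet F s).card) := by rw [mul_add]; nlinarith
      _ ≤ 1 + (r - 1) * B * stairPotential S F := by rw [mul_assoc]; gcongr

theorem card_le_pow_of_patternPotential_le (hL : 2 ≤ L) (hstair : StairsForceTFam r L S) :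
    ∀ n {m} (F : Finset (Fin m → Fin r)), ¬ContainsTFam L F → patternPotential L F ≤ n →
      F.card ≤ (1 + (r - 1) * r.choose 2 * S) ^ n := by
  intro n
  induction n with
  | zero => exact fun F _ hpot => card_le_one_of_patternPotential_eq_zero hL (by omega)
  | succ n ih =>
    intro m F hF hpot
    have hpos : 1 ≤ (1 + (r - 1) * r.choose 2 * S) ^ n := Nat.one_le_pow _ _ (by omega)
    calc F.card ≤ 1 + (r - 1) * (1 + (r - 1) * r.choose 2 * S) ^ n * stairPotential S F :=
          card_le_of_patternPotential_le_succ (by omega) hstair ih F hF hpot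
      _ ≤ 1 + (r - 1) * (1 + (r - 1) * r.choose 2 * S) ^ n * (r.choose 2 * S) := by
          gcongr; exact stairPotential_le S F
      _ ≤ (1 + (r - 1) * r.choose 2 * S) ^ (n + 1) := by rw [pow_succ]; nlinarith

theorem containsTFam_of_card_lt (hL : 2 ≤ L) (hstair : StairsForceTFam r L S)
    {m : ℕ} {F : Finset (Fin m → Fin r)}
    (hF : (1 + (r - 1) * r.choose 2 * S) ^ (r.choose 2 * (L - 1)) < F.card) :
    ContainsTFam L F := by
  by_contra h
  exact hF.not_ge (card_le_pow_of_patternPotential_le hL hstair _ F h (patternPotential_le L F))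

end Counting

theorem card_threshold_le {r : ℕ} (hr : 2 ≤ r) (u : ℕ) :
    (1 + (r - 1) * r.choose 2 * stairBound r (u * u + 1)) ^ (r.choose 2 * (u * u)) ≤
      r ^ (30 * r.choose 2 ^ 2 * (u + 1) ^ 4) := by
  obtain ⟨t, rfl⟩ : ∃ t, r = t + 2 := ⟨r - 2, by omega⟩
  set P := (t + 2).choose 2
  set c := (t + 2) * (t + 2) - 1 + (t + 2)
  set E := c * (2 * (u * u + 1)) + 1
  have hP : P * 2 = (t + 2) * (t + 1) := by
    simpa using (Nat.add_one_mul_choose_eq (t + 1) 1).symm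
  have hc : c = t * t + 5 * t + 5 := by
    have : (t + 2) * (t + 2) = t * t + 4 * t + 4 := by ring
    omega
  have hcE : 1 ≤ c ^ E := Nat.one_le_pow _ _ (by omega)
  have hbase : 1 + (t + 2 - 1) * P * c ^ E ≤ (t + 2) ^ (3 * E + 3) := calc
    1 + (t + 2 - 1) * P * c ^ E ≤ (1 + (t + 1) * P) * c ^ E := by
      rw [show t + 2 - 1 = t + 1 by omega]; nlinarith
    _ ≤ (t + 2) ^ 3 * ((t + 2) ^ 3) ^ E := by
      gcongr
      · nlinarith
      · rw [hc]; nlinarith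
    _ = (t + 2) ^ (3 * E + 3) := by rw [← pow_mul, ← pow_add]; ring_nf
  have hexp : (3 * E + 3) * (P * (u * u)) ≤ 30 * P ^ 2 * (u + 1) ^ 4 := by
    have : (3 * E + 3) * (u * u) * 2 ≤ 30 * (P * 2) * (u + 1) ^ 4 := by
      rw [hP]
      simp only [E, hc]
      nlinarith [Nat.zero_le (t * u ^ 4), Nat.zero_le (t ^ 2 * u ^ 4),
        Nat.zero_le (t ^ 2 * u ^ 3), Nat.zero_le (t * u ^ 3), Nat.zero_le (u ^ 3)]
    nlinarith
  calc (1 + (t + 2 - 1) * P * c ^ E) ^ (P * (u * u))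
      ≤ ((t + 2) ^ (3 * E + 3)) ^ (P * (u * u)) := Nat.pow_le_pow_left hbase _
    _ = (t + 2) ^ ((3 * E + 3) * (P * (u * u))) := (pow_mul _ _ _).symm
    _ ≤ (t + 2) ^ (30 * P ^ 2 * (u + 1) ^ 4) := Nat.pow_le_pow_right (by omega) hexp

open scoped Matrix in
theorem exists_strictMono_submatrix {α : Type*} [DecidableEq α] {m n k u : ℕ}
    (A : Matrix (Fin m) (Fin n) α) {E : Matrix (Fin k) (Fin (u * u + 1)) α}
    (hE : Function.Injective Eᵀ) (h : Realizes (Finset.univ.image fun j i => A i j) E) :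
    ∃ g : Fin (u + 1) → Fin (u * u + 1), StrictMono g ∧
      ∃ ρ : Fin k → Fin m, StrictMono ρ ∧ ∃ σ : Fin (u + 1) → Fin n, StrictMono σ ∧
        ((∀ p q, A (ρ p) (σ q) = E p (g q)) ∨ (∀ p q, A (ρ p) (σ q) = E p (g q.rev))) := by
  obtain ⟨ρ, hρ, y, hyA, hy⟩ := h
  choose σ₀ hσ₀ using fun q => Finset.mem_image.1 (hyA q)
  have hσ₀inj : Function.Injective σ₀ := fun q q' h => hE <| funext fun p => by
    simp only [Matrix.transpose_apply, ← hy, ← (hσ₀ q).2, ← (hσ₀ q').2, h]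
  obtain ⟨g, hg, hmono | hanti⟩ :=
    exists_strictMono_or_strictAnti_comp σ₀ hσ₀inj (Nat.lt_succ_self (u * u))
  · exact ⟨g, hg, ρ, hρ, σ₀ ∘ g, hmono, .inl fun p q => by simp [← hy, ← (hσ₀ _).2]⟩
  · exact ⟨g, hg, ρ, hρ, σ₀ ∘ g ∘ Fin.rev, hanti.comp Fin.rev_strictAnti,
      .inr fun p q => by simp [← hy, ← (hσ₀ _).2]⟩

end ColumnSet

open ColumnSet in
/-- (Forbidden submatrices.) For every `r ≥ 2`, with
`c_r = 30·(r choose 2)²·log₂ r` (so `2^{c_r·ℓ⁴} = r^{30·(r choose 2)²·ℓ⁴}`): for every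
`ℓ ≥ 2`, every matrix with entries in `{0,…,r−1}` having more than `2^{c_r·ℓ⁴}`
distinct columns contains as a submatrix (rows and columns both selected in
increasing order) one of `I_ℓ(a,b)`, `T_ℓ(a,b)`, `I_ℓᴿ(a,b)`, `T_ℓᴿ(a,b)` for some
`a ≠ b`, where `ᴿ` denotes reversal of the column order. -/
theorem submatrix_main (r : ℕ) (hr : 2 ≤ r) (ℓ : ℕ) (hℓ : 2 ≤ ℓ) (m n : ℕ)
    (A : Matrix (Fin m) (Fin n) (Fin r))
    (hn : r ^ (30 * (r.choose 2) ^ 2 * ℓ ^ 4) <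
      (Finset.univ.image fun j : Fin n => fun i : Fin m => A i j).card) :
    ∃ a b : Fin r, a ≠ b ∧ ∃ ρ : Fin ℓ → Fin m, ∃ σ : Fin ℓ → Fin n,
      StrictMono ρ ∧ StrictMono σ ∧
      ((∀ i j, A (ρ i) (σ j) = Imat ℓ r a b i j) ∨
       (∀ i j, A (ρ i) (σ j) = Tmat ℓ r a b i j) ∨
       (∀ i j, A (ρ i) (σ j) = Imat ℓ r a b i j.rev) ∨
       (∀ i j, A (ρ i) (σ j) = Tmat ℓ r a b i j.rev)) := by
  obtain ⟨u, rfl⟩ : ∃ u, ℓ = u + 1 := ⟨ℓ - 1, by omega⟩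
  have hcols : ContainsTFam (u * u + 1) (Finset.univ.image fun j i => A i j) :=
    containsTFam_of_card_lt (by nlinarith) (stairsForceTFam_stairBound r _)
      (by simpa using (card_threshold_le hr u).trans_lt hn)
  obtain ⟨M, ⟨a, b, hab, rfl | rfl⟩, hM⟩ := hcols
  · obtain ⟨g, hg, ρ, hρ, σ, hσ, h | h⟩ :=
      exists_strictMono_submatrix A (Imat_transpose_injective hab) hM
    · exact ⟨a, b, hab, ρ ∘ g, σ, hρ.comp hg, hσ,
        .inl fun p q => (h _ _).trans (congrFun₂ (Imat_submatrix_of_strictMono hg) p q)⟩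
    · exact ⟨a, b, hab, ρ ∘ g, σ, hρ.comp hg, hσ,
        .inr (.inr (.inl fun p q => (h _ _).trans
          (congrFun₂ (Imat_submatrix_of_strictMono hg) p q.rev)))⟩
  · obtain ⟨g, hg, ρ, hρ, σ, hσ, h | h⟩ :=
      exists_strictMono_submatrix A (Tmat_transpose_injective hab) hM
    · exact ⟨a, b, hab, ρ ∘ g, σ, hρ.comp hg, hσ,
        .inr (.inl fun p q => (h _ _).trans (congrFun₂ (Tmat_submatrix_of_strictMono hg) p q))⟩
    · exact ⟨a, b, hab, ρ ∘ g, σ, hρ.comp hg, hσ,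
        .inr (.inr (.inr fun p q => (h _ _).trans
          (congrFun₂ (Tmat_submatrix_of_strictMono hg) p q.rev)))⟩
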